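/- arXiv:2605.20409 — 3 statements merged into one kernel-verified Lean document; each statement's English description precedes it below -/
import Mathlib

section
/- For d ≥ 3, the 3-cosystole of the graphic matroid of the complete graph K_{d+1} equals 6/(d+1). That is, sys₃*(M(K_{d+1})) = 6/(d+1), where sys₃*(M) = max over probability distributions μ on E(M) of the minimum of μ(C₁*)+μ(C₂*)+μ(C₃*) over triples of cocircuits with the non-inclusion property. -/
open Set

variable {α V : Type*}

/-- The total `μ`-weight of a set. -/
noncomputable def wt (μ : α → ℝ) (X : Set α) : ℝ := ∑ᶠ x ∈ X, μ x

/-- The non-inclusion property for a triple of sets. -/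
def NonIncl (C₁ C₂ C₃ : Set α) : Prop :=
  ¬ C₁ ⊆ C₂ ∪ C₃ ∧ ¬ C₂ ⊆ C₁ ∪ C₃ ∧ ¬ C₃ ⊆ C₁ ∪ C₂

/-- The weighted 3-cosystole relative to a family `K` of "cocircuits":
the minimum total weight of a non-inclusion triple of members of `K`. -/
noncomputable def sys3wtP (μ : α → ℝ) (K : Set α → Prop) : ℝ :=
  sInf {s | ∃ C₁ C₂ C₃, K C₁ ∧ K C₂ ∧ K C₃ ∧ NonIncl C₁ C₂ C₃ ∧
    s = wt μ C₁ + wt μ C₂ + wt μ C₃}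

/-- The 3-cosystole relative to a ground set `E` and a family `K` of "cocircuits":
the maximum of the weighted 3-cosystole over probability distributions on `E`. -/
noncomputable def sys3P (E : Set α) (K : Set α → Prop) : ℝ :=
  sSup {t | ∃ μ : α → ℝ, (∀ e, 0 ≤ μ e) ∧ (∀ e ∉ E, μ e = 0) ∧ wt μ E = 1 ∧
    t = sys3wtP μ K}

/-- An edge cut of a graph: a set of edges whose deletion disconnects the graph. -/
def IsEdgeCut (G : SimpleGraph V) (C : Set (Sym2 V)) : Prop :=
  C ⊆ G.edgeSet ∧ ¬ (G.deleteEdges C).Connected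

/-- A bond of a graph: a minimal edge cut. These are the cocircuits of the
graphic (cycle) matroid of a connected graph. -/
def IsBond (G : SimpleGraph V) (C : Set (Sym2 V)) : Prop :=
  IsEdgeCut G C ∧ ∀ ⦃D⦄, IsEdgeCut G D → D ⊆ C → D = C

/-- The edge set of a cycle of a graph. These are the cocircuits of the
cographic matroid of the graph. -/
def IsCycleSet (G : SimpleGraph V) (C : Set (Sym2 V)) : Prop :=
  ∃ (v : V) (w : G.Walk v v), w.IsCycle ∧ C = {e | e ∈ w.edges}

/-- The vertex bond at `v`: the set of edges incident to `v`. -/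
def vertexBond (G : SimpleGraph V) (v : V) : Set (Sym2 V) :=
  {e ∈ G.edgeSet | v ∈ e}

/-! ### Auxiliary development -/

section Aux

lemma wt_eq_sum {α : Type*} [Fintype α] (μ : α → ℝ) (X : Set α) :
    wt μ X = ∑ e ∈ X.toFinite.toFinset, μ e := by
  rw [wt, ← finsum_mem_coe_finset, Set.Finite.coe_toFinset]

lemma wt_nonneg {α : Type*} [Fintype α] {μ : α → ℝ} (hμ : ∀ e, 0 ≤ μ e) (X : Set α) :
    0 ≤ wt μ X := by
  rw [wt_eq_sum]
  exact Finset.sum_nonneg fun e _ => hμ e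

variable {n : ℕ}

local notation "Kn" => SimpleGraph.completeGraph (Fin n)

lemma kn_adj {a b : Fin n} (h : a ≠ b) : (Kn).Adj a b := h

lemma vertexBond_eq_image (v : Fin n) :
    vertexBond Kn v = (fun u => s(v, u)) '' {u | u ≠ v} := by
  refine Set.ext fun e => ?_
  induction e using Sym2.ind with
  | _ a b =>
    constructor
    · rintro ⟨he, hv⟩
      have hab : a ≠ b := (SimpleGraph.mem_edgeSet _).mp he
      rcases Sym2.mem_iff.mp hv with rfl | rfl
      · exact ⟨b, hab.symm, rfl⟩
      · exact ⟨a, hab, Sym2.eq_swap.symm⟩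
    · rintro ⟨u, hu, heq⟩
      rw [← heq]
      exact ⟨(SimpleGraph.mem_edgeSet _).mpr (Ne.symm hu), Sym2.mem_mk_left _ _⟩

lemma ncard_vertexBond (v : Fin n) : (vertexBond Kn v).ncard = n - 1 := by
  rw [vertexBond_eq_image]
  rw [Set.ncard_image_of_injOn (fun x _ y _ h => by
    rcases Sym2.eq_iff.mp h with ⟨_, h2⟩ | ⟨h1, h2⟩
    · exact h2
    · exact h2.trans h1)]
  have : ({u : Fin n | u ≠ v}) = Set.univ \ {v} := by ext u; simp
  rw [this, Set.ncard_diff (by simp), Set.ncard_univ, Set.ncard_singleton,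
    Nat.card_eq_fintype_card, Fintype.card_fin]

lemma vertexBond_subset (v : Fin n) : vertexBond Kn v ⊆ (Kn).edgeSet := fun _ he => he.1

/-- Double counting: summing star weights over all vertices counts every edge twice. -/
lemma sum_wt_vertexBond (μ : Sym2 (Fin n) → ℝ) :
    ∑ v : Fin n, wt μ (vertexBond Kn v) = 2 * wt μ (Kn).edgeSet := by
  classical
  have h1 : ∀ v : Fin n, (vertexBond Kn v).toFinite.toFinset
      = ((Kn).edgeSet.toFinite.toFinset).filter (fun e => v ∈ e) := by
    intro v; ext e; simp [vertexBond]
  simp_rw [wt_eq_sum, h1, Finset.sum_filter]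
  rw [Finset.sum_comm, Finset.mul_sum]
  refine Finset.sum_congr rfl fun e he => ?_
  have heE : e ∈ (Kn).edgeSet := by simpa using he
  induction e using Sym2.ind with
  | _ a b =>
    have hab : a ≠ b := (SimpleGraph.mem_edgeSet _).mp heE
    have hfilter : (Finset.univ.filter (fun v : Fin n => v ∈ s(a, b))) = {a, b} := by
      ext v; simp [Sym2.mem_iff]
    rw [← Finset.sum_filter, hfilter, Finset.sum_pair hab]
    ring

lemma isBond_vertexBond (hn : 2 ≤ n) (v : Fin n) : IsBond Kn (vertexBond Kn v) := by
  have hnt : Nontrivial (Fin n) := Fin.nontrivial_iff_two_le.mpr hn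
  constructor
  · refine ⟨vertexBond_subset v, fun hconn => ?_⟩
    obtain ⟨u, hu⟩ := exists_ne v
    have hiso : ∀ w, ¬ ((Kn).deleteEdges (vertexBond Kn v)).Adj v w := by
      intro w hadj
      rw [SimpleGraph.deleteEdges_adj] at hadj
      exact hadj.2 ⟨(SimpleGraph.mem_edgeSet _).mpr hadj.1, Sym2.mem_mk_left _ _⟩
    have key : ∀ (w : Fin n) (p : ((Kn).deleteEdges (vertexBond Kn v)).Walk v w), v = w := by
      intro w p
      cases p with
      | nil => rfl
      | cons h _ => exact absurd h (hiso _)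
    obtain ⟨p⟩ := hconn.preconnected v u
    exact hu (key u p).symm
  · intro D hD hsub
    by_contra hne
    have hns : ¬ vertexBond Kn v ⊆ D := fun h => hne (Set.Subset.antisymm hsub h)
    obtain ⟨e, he, heD⟩ := Set.not_subset.mp hns
    rw [vertexBond_eq_image] at he
    obtain ⟨u0, hu0, rfl⟩ := he
    have hadj : ∀ x y : Fin n, x ≠ y → x ≠ v → y ≠ v →
        ((Kn).deleteEdges D).Adj x y := by
      intro x y hxy hxv hyv
      rw [SimpleGraph.deleteEdges_adj]
      refine ⟨kn_adj hxy, fun hmem => ?_⟩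
      rcases Sym2.mem_iff.mp (hsub hmem).2 with h | h
      · exact hxv h.symm
      · exact hyv h.symm
    have hvu0 : ((Kn).deleteEdges D).Adj v u0 := by
      rw [SimpleGraph.deleteEdges_adj]
      exact ⟨kn_adj (Ne.symm hu0), heD⟩
    have hreach : ∀ x : Fin n, ((Kn).deleteEdges D).Reachable x u0 := by
      intro x
      by_cases hxv : x = v
      · subst hxv; exact hvu0.reachable
      · by_cases hxu : x = u0
        · subst hxu; exact SimpleGraph.Reachable.refl _
        · exact (hadj x u0 hxu hxv hu0).reachable
    have hNE : Nonempty (Fin n) := ⟨v⟩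
    exact hD.2 ⟨fun x y => (hreach x).trans (hreach y).symm⟩

lemma le_ncard_of_isEdgeCut (hn : 1 ≤ n) {C : Set (Sym2 (Fin n))}
    (hC : IsEdgeCut Kn C) : n - 1 ≤ C.ncard := by
  classical
  have hNE : Nonempty (Fin n) := ⟨⟨0, hn⟩⟩
  set G' := (Kn).deleteEdges C with hG'
  have hnp : ¬ G'.Preconnected := fun h => hC.2 ⟨h⟩
  rw [SimpleGraph.Preconnected] at hnp
  push_neg at hnp
  obtain ⟨x, y, hxy⟩ := hnp
  set A := {z : Fin n | G'.Reachable x z} with hA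
  have hx : x ∈ A := SimpleGraph.Reachable.refl _
  have hy : y ∉ A := hxy
  have hxy' : x ≠ y := fun h => hy (h ▸ hx)
  have hcut : ∀ a ∈ A, ∀ b ∉ A, s(a, b) ∈ C := by
    intro a ha b hb
    by_contra hmem
    have hab : a ≠ b := fun h => hb (h ▸ ha)
    have : G'.Adj a b := by
      rw [hG', SimpleGraph.deleteEdges_adj]; exact ⟨kn_adj hab, hmem⟩
    exact hb (ha.trans this.reachable)
  set f : Fin n → Sym2 (Fin n) := fun z => if z ∈ A then s(z, y) else s(x, z) with hf
  have himg : ∀ z, f z ∈ C := by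
    intro z
    by_cases hz : z ∈ A
    · simpa [hf, hz] using hcut z hz y hy
    · simpa [hf, hz] using hcut x hx z hz
  have hinj : Set.InjOn f {y}ᶜ := by
    intro z hz z' hz' heq
    simp only [Set.mem_compl_iff, Set.mem_singleton_iff] at hz hz'
    by_cases h1 : z ∈ A <;> by_cases h2 : z' ∈ A <;>
      simp only [hf, h1, h2, if_true, if_false] at heq
    · rcases Sym2.eq_iff.mp heq with ⟨h, _⟩ | ⟨h, _⟩
      · exact h
      · exact absurd h hz
    · rcases Sym2.eq_iff.mp heq with ⟨_, h'⟩ | ⟨_, h'⟩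
      · exact absurd h'.symm hz'
      · exact absurd h'.symm hxy'
    · rcases Sym2.eq_iff.mp heq with ⟨_, h'⟩ | ⟨h, _⟩
      · exact absurd h' hz
      · exact absurd h hxy'
    · rcases Sym2.eq_iff.mp heq with ⟨_, h'⟩ | ⟨_, h'⟩
      · exact h'
      · exact absurd (by rw [h']; exact hx) h1
  have hsub : f '' {y}ᶜ ⊆ C := by rintro _ ⟨z, _, rfl⟩; exact himg z
  have h1 : ({y}ᶜ : Set (Fin n)).ncard = n - 1 := by
    rw [show ({y}ᶜ : Set (Fin n)) = Set.univ \ {y} by ext; simp,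
      Set.ncard_diff (by simp), Set.ncard_univ, Set.ncard_singleton,
      Nat.card_eq_fintype_card, Fintype.card_fin]
  calc n - 1 = ({y}ᶜ : Set (Fin n)).ncard := h1.symm
    _ = (f '' {y}ᶜ).ncard := (Set.ncard_image_of_injOn hinj).symm
    _ ≤ C.ncard := Set.ncard_le_ncard hsub C.toFinite

/-- Weight of a subset of the edge set under an edge-set supported constant function. -/
lemma wt_const_on {X : Set (Sym2 (Fin n))} (hX : X ⊆ (Kn).edgeSet) (c : ℝ) :
    wt ((Kn).edgeSet.indicator fun _ => c) X = X.ncard * c := by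
  rw [wt_eq_sum]
  have h : ∀ e ∈ X.toFinite.toFinset, (Kn).edgeSet.indicator (fun _ => c) e = c := by
    intro e he
    exact Set.indicator_of_mem (hX (by simpa using he)) _
  rw [Finset.sum_congr rfl h, Finset.sum_const, Set.ncard_eq_toFinset_card X X.toFinite,
    nsmul_eq_mul]

lemma two_mul_ncard_edgeSet (hn : 1 ≤ n) :
    2 * ((Kn).edgeSet.ncard : ℝ) = n * ((n : ℝ) - 1) := by
  have h := sum_wt_vertexBond (n := n) ((Kn).edgeSet.indicator fun _ => (1 : ℝ))
  rw [wt_const_on Set.Subset.rfl 1] at h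
  have h2 : ∀ v : Fin n, wt ((Kn).edgeSet.indicator fun _ => (1 : ℝ))
      (vertexBond Kn v) = ((n - 1 : ℕ) : ℝ) := by
    intro v
    rw [wt_const_on (vertexBond_subset v), ncard_vertexBond]; ring
  rw [Finset.sum_congr rfl (fun v _ => h2 v), Finset.sum_const, Finset.card_univ,
    Fintype.card_fin] at h
  have h3 : ((n - 1 : ℕ) : ℝ) = (n : ℝ) - 1 := by
    have := Nat.cast_sub (R := ℝ) hn
    simpa using this
  rw [h3, nsmul_eq_mul] at h
  linarith

end Aux

section Main

variable {n : ℕ}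

local notation "Kn" => SimpleGraph.completeGraph (Fin n)

/-- The uniform distribution on the edges of `K_n`. -/
noncomputable def unifμ (n : ℕ) : Sym2 (Fin n) → ℝ :=
  (SimpleGraph.completeGraph (Fin n)).edgeSet.indicator
    fun _ => 1 / (((SimpleGraph.completeGraph (Fin n)).edgeSet.ncard : ℝ))

lemma ncard_edgeSet_pos (hn : 2 ≤ n) : 0 < ((Kn).edgeSet.ncard : ℝ) := by
  have h := two_mul_ncard_edgeSet (n := n) (by omega)
  have hn' : (2 : ℝ) ≤ (n : ℝ) := by exact_mod_cast hn
  nlinarith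

lemma unifμ_nonneg (e : Sym2 (Fin n)) : 0 ≤ unifμ n e := by
  refine Set.indicator_nonneg (fun _ _ => ?_) e
  positivity

lemma wt_unifμ {X : Set (Sym2 (Fin n))} (hX : X ⊆ (Kn).edgeSet) :
    wt (unifμ n) X = (X.ncard : ℝ) / ((Kn).edgeSet.ncard : ℝ) := by
  rw [unifμ, wt_const_on hX]
  ring

lemma wt_unifμ_total (hn : 2 ≤ n) : wt (unifμ n) (Kn).edgeSet = 1 := by
  rw [wt_unifμ Set.Subset.rfl, div_self (ncard_edgeSet_pos hn).ne']

lemma npos_real (hn : 2 ≤ n) : (0 : ℝ) < n := by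
  have : (2 : ℝ) ≤ (n : ℝ) := by exact_mod_cast hn
  linarith

lemma wt_unifμ_vertexBond (hn : 2 ≤ n) (v : Fin n) :
    wt (unifμ n) (vertexBond Kn v) = 2 / (n : ℝ) := by
  rw [wt_unifμ (vertexBond_subset v), ncard_vertexBond]
  have hm := two_mul_ncard_edgeSet (n := n) (by omega)
  have hmpos := ncard_edgeSet_pos hn
  have hnpos := npos_real hn
  have h2 : ((n - 1 : ℕ) : ℝ) = (n : ℝ) - 1 := by
    have := Nat.cast_sub (R := ℝ) (by omega : 1 ≤ n); simpa using this
  rw [h2, div_eq_div_iff hmpos.ne' hnpos.ne']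
  nlinarith

lemma wt_unifμ_cut (hn : 2 ≤ n) {C : Set (Sym2 (Fin n))} (hC : IsEdgeCut Kn C) :
    2 / (n : ℝ) ≤ wt (unifμ n) C := by
  rw [wt_unifμ hC.1]
  have hcard := le_ncard_of_isEdgeCut (by omega) hC
  have hmpos := ncard_edgeSet_pos hn
  have hm := two_mul_ncard_edgeSet (n := n) (by omega)
  have h1 : ((n - 1 : ℕ) : ℝ) ≤ (C.ncard : ℝ) := by exact_mod_cast hcard
  have h2 : ((n - 1 : ℕ) : ℝ) = (n : ℝ) - 1 := by
    have := Nat.cast_sub (R := ℝ) (by omega : 1 ≤ n); simpa using this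
  have hnpos := npos_real hn
  rw [div_le_div_iff₀ hnpos hmpos]
  nlinarith

lemma nonIncl_aux (hn : 4 ≤ n) {a b c : Fin n} (hab : a ≠ b) (hac : a ≠ c) :
    ¬ vertexBond Kn a ⊆ vertexBond Kn b ∪ vertexBond Kn c := by
  classical
  intro hsub
  have hcard : ({a, b, c} : Finset (Fin n)).card ≤ 3 := by
    apply le_trans (Finset.card_insert_le _ _)
    have := Finset.card_insert_le b ({c} : Finset (Fin n))
    simp only [Finset.card_singleton] at this ⊢
    omega
  have hpos : 0 < (({a, b, c} : Finset (Fin n))ᶜ).card := by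
    rw [Finset.card_compl, Fintype.card_fin]
    omega
  obtain ⟨x, hx⟩ := Finset.card_pos.mp hpos
  rw [Finset.mem_compl] at hx
  simp only [Finset.mem_insert, Finset.mem_singleton, not_or] at hx
  obtain ⟨hxa, hxb, hxc⟩ := hx
  have hmem : s(a, x) ∈ vertexBond Kn a :=
    ⟨(SimpleGraph.mem_edgeSet _).mpr (kn_adj (Ne.symm hxa)), Sym2.mem_mk_left _ _⟩
  rcases hsub hmem with h | h
  · rcases Sym2.mem_iff.mp h.2 with h' | h'
    · exact hab h'.symm
    · exact hxb h'.symm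
  · rcases Sym2.mem_iff.mp h.2 with h' | h'
    · exact hac h'.symm
    · exact hxc h'.symm

lemma nonIncl_vertexBonds (hn : 4 ≤ n) {u v w : Fin n}
    (huv : u ≠ v) (huw : u ≠ w) (hvw : v ≠ w) :
    NonIncl (vertexBond Kn u) (vertexBond Kn v) (vertexBond Kn w) :=
  ⟨nonIncl_aux hn huv huw, nonIncl_aux hn huv.symm hvw, nonIncl_aux hn huw.symm hvw.symm⟩

lemma sys3_bddBelow {μ : Sym2 (Fin n) → ℝ} (hμ : ∀ e, 0 ≤ μ e) :
    BddBelow {s | ∃ C₁ C₂ C₃, IsBond Kn C₁ ∧ IsBond Kn C₂ ∧ IsBond Kn C₃ ∧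
      NonIncl C₁ C₂ C₃ ∧ s = wt μ C₁ + wt μ C₂ + wt μ C₃} := by
  refine ⟨0, fun s hs => ?_⟩
  obtain ⟨C₁, C₂, C₃, _, _, _, _, rfl⟩ := hs
  have := wt_nonneg hμ C₁
  have := wt_nonneg hμ C₂
  have := wt_nonneg hμ C₃
  linarith

lemma sys3wt_le_of_prob (hn : 4 ≤ n) {μ : Sym2 (Fin n) → ℝ} (hμ0 : ∀ e, 0 ≤ μ e)
    (htot : wt μ (Kn).edgeSet = 1) :
    sys3wtP μ (IsBond Kn) ≤ 6 / (n : ℝ) := by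
  classical
  obtain ⟨u, -, hu⟩ := Finset.exists_min_image Finset.univ
    (fun v : Fin n => wt μ (vertexBond Kn v)) ⟨⟨0, by omega⟩, Finset.mem_univ _⟩
  have hne2 : (Finset.univ.erase u).Nonempty := by
    rw [← Finset.card_pos, Finset.card_erase_of_mem (Finset.mem_univ _), Finset.card_univ,
      Fintype.card_fin]
    omega
  obtain ⟨v, hvmem, hv⟩ := Finset.exists_min_image _
    (fun v : Fin n => wt μ (vertexBond Kn v)) hne2
  have hne3 : ((Finset.univ.erase u).erase v).Nonempty := by
    rw [← Finset.card_pos, Finset.card_erase_of_mem hvmem,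
      Finset.card_erase_of_mem (Finset.mem_univ _), Finset.card_univ, Fintype.card_fin]
    omega
  obtain ⟨w, hwmem, hw⟩ := Finset.exists_min_image _
    (fun v : Fin n => wt μ (vertexBond Kn v)) hne3
  have hvu : v ≠ u := Finset.ne_of_mem_erase hvmem
  have hwv : w ≠ v := Finset.ne_of_mem_erase hwmem
  have hwu : w ≠ u := Finset.ne_of_mem_erase (Finset.mem_of_mem_erase hwmem)
  set T := wt μ (vertexBond Kn u) + wt μ (vertexBond Kn v) + wt μ (vertexBond Kn w) with hT
  have hsumf : ∑ x : Fin n, wt μ (vertexBond Kn x) = 2 := by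
    rw [sum_wt_vertexBond, htot]; ring
  set S3 : Finset (Fin n) := {u, v, w} with hS3
  have huS3 : u ∉ ({v, w} : Finset (Fin n)) := by
    simp only [Finset.mem_insert, Finset.mem_singleton, not_or]
    exact ⟨hvu.symm, hwu.symm⟩
  have hvS3 : v ∉ ({w} : Finset (Fin n)) := by
    simp only [Finset.mem_singleton]
    exact hwv.symm
  have hS3card : S3.card = 3 := by
    rw [hS3, Finset.card_insert_of_notMem huS3, Finset.card_insert_of_notMem hvS3,
      Finset.card_singleton]
  have hsumS3 : ∑ x ∈ S3, wt μ (vertexBond Kn x) = T := by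
    rw [hS3, Finset.sum_insert huS3, Finset.sum_insert hvS3, Finset.sum_singleton, hT]; ring
  have hkey : ∀ x ∈ Finset.univ \ S3, T ≤ 3 * wt μ (vertexBond Kn x) := by
    intro x hx
    rw [Finset.mem_sdiff, hS3] at hx
    simp only [Finset.mem_insert, Finset.mem_singleton, not_or] at hx
    obtain ⟨-, hxu, hxv, hxw⟩ := hx
    have h1 := hu x (Finset.mem_univ x)
    have h2 := hv x (Finset.mem_erase.mpr ⟨hxu, Finset.mem_univ x⟩)
    have h3 := hw x (Finset.mem_erase.mpr ⟨hxv, Finset.mem_erase.mpr ⟨hxu, Finset.mem_univ x⟩⟩)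
    rw [hT]; linarith
  have hcard_sdiff : (Finset.univ \ S3).card = n - 3 := by
    rw [Finset.card_sdiff_of_subset (Finset.subset_univ _), Finset.card_univ, Fintype.card_fin, hS3card]
  have hbound := Finset.card_nsmul_le_sum (Finset.univ \ S3)
    (fun x => 3 * wt μ (vertexBond Kn x)) T hkey
  have hsumsdiff : ∑ x ∈ Finset.univ \ S3, wt μ (vertexBond Kn x) = 2 - T := by
    have h := Finset.sum_sdiff (f := fun x => wt μ (vertexBond Kn x)) (Finset.subset_univ S3)
    rw [hsumS3, hsumf] at h
    linarith
  have hsum3 : ∑ x ∈ Finset.univ \ S3, 3 * wt μ (vertexBond Kn x) = 3 * (2 - T) := by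
    rw [← Finset.mul_sum, hsumsdiff]
  rw [hcard_sdiff, hsum3, nsmul_eq_mul] at hbound
  have h3n : (3 : ℕ) ≤ n := by omega
  have hc3 : ((n - 3 : ℕ) : ℝ) = (n : ℝ) - 3 := by
    have := Nat.cast_sub (R := ℝ) h3n; simpa using this
  rw [hc3] at hbound
  have hnpos := npos_real (n := n) (by omega)
  have hTle : T ≤ 6 / (n : ℝ) := by
    rw [le_div_iff₀ hnpos]; nlinarith
  rw [sys3wtP]
  refine le_trans (csInf_le (sys3_bddBelow hμ0) ?_) hTle
  exact ⟨vertexBond Kn u, vertexBond Kn v, vertexBond Kn w,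
    isBond_vertexBond (by omega) u, isBond_vertexBond (by omega) v, isBond_vertexBond (by omega) w,
    nonIncl_vertexBonds hn hvu.symm hwu.symm hwv.symm, hT⟩

lemma sys3wt_unif (hn : 4 ≤ n) : sys3wtP (unifμ n) (IsBond Kn) = 6 / (n : ℝ) := by
  have h2n : 2 ≤ n := by omega
  set a : Fin n := ⟨0, by omega⟩ with ha
  set b : Fin n := ⟨1, by omega⟩ with hb
  set c : Fin n := ⟨2, by omega⟩ with hc
  have hab : a ≠ b := fun h => by simpa [ha, hb] using congrArg Fin.val h
  have hac : a ≠ c := fun h => by simpa [ha, hc] using congrArg Fin.val h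
  have hbc : b ≠ c := fun h => by simpa [hb, hc] using congrArg Fin.val h
  have hmemtriple : (6 / (n : ℝ)) ∈ {s | ∃ C₁ C₂ C₃, IsBond Kn C₁ ∧ IsBond Kn C₂ ∧
      IsBond Kn C₃ ∧ NonIncl C₁ C₂ C₃ ∧
      s = wt (unifμ n) C₁ + wt (unifμ n) C₂ + wt (unifμ n) C₃} := by
    refine ⟨vertexBond Kn a, vertexBond Kn b, vertexBond Kn c,
      isBond_vertexBond h2n a, isBond_vertexBond h2n b, isBond_vertexBond h2n c,
      nonIncl_vertexBonds hn hab hac hbc, ?_⟩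
    rw [wt_unifμ_vertexBond h2n, wt_unifμ_vertexBond h2n, wt_unifμ_vertexBond h2n]
    ring
  rw [sys3wtP]
  apply le_antisymm
  · exact csInf_le (sys3_bddBelow unifμ_nonneg) hmemtriple
  · refine le_csInf ⟨_, hmemtriple⟩ ?_
    rintro s ⟨C₁, C₂, C₃, h1, h2, h3, -, rfl⟩
    have k1 := wt_unifμ_cut h2n h1.1
    have k2 := wt_unifμ_cut h2n h2.1
    have k3 := wt_unifμ_cut h2n h3.1
    have hsum : 2 / (n : ℝ) + 2 / n + 2 / n = 6 / n := by ring
    linarith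

end Main

/-- For `d ≥ 3`, the 3-cosystole of the graphic matroid of `K_{d+1}`
(whose cocircuits are the bonds of `K_{d+1}`) equals `6/(d+1)`. -/
theorem stmt3 (d : ℕ) (hd : 3 ≤ d) :
    sys3P (SimpleGraph.completeGraph (Fin (d + 1))).edgeSet (IsBond (SimpleGraph.completeGraph (Fin (d + 1)))) =
      6 / (d + 1 : ℝ) := by
  have hn : 4 ≤ d + 1 := by omega
  have hcast : (6 : ℝ) / (d + 1 : ℝ) = 6 / ((d + 1 : ℕ) : ℝ) := by push_cast; ring
  rw [hcast, sys3P]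
  have hmem : 6 / ((d + 1 : ℕ) : ℝ) ∈ {t | ∃ μ : Sym2 (Fin (d + 1)) → ℝ, (∀ e, 0 ≤ μ e) ∧
      (∀ e ∉ (SimpleGraph.completeGraph (Fin (d + 1))).edgeSet, μ e = 0) ∧
      wt μ (SimpleGraph.completeGraph (Fin (d + 1))).edgeSet = 1 ∧
      t = sys3wtP μ (IsBond (SimpleGraph.completeGraph (Fin (d + 1))))} := by
    refine ⟨unifμ (d + 1), unifμ_nonneg, ?_, wt_unifμ_total (by omega),
      (sys3wt_unif hn).symm⟩
    intro e he
    exact Set.indicator_of_notMem he _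
  have hub : ∀ t ∈ {t | ∃ μ : Sym2 (Fin (d + 1)) → ℝ, (∀ e, 0 ≤ μ e) ∧
      (∀ e ∉ (SimpleGraph.completeGraph (Fin (d + 1))).edgeSet, μ e = 0) ∧
      wt μ (SimpleGraph.completeGraph (Fin (d + 1))).edgeSet = 1 ∧
      t = sys3wtP μ (IsBond (SimpleGraph.completeGraph (Fin (d + 1))))},
      t ≤ 6 / ((d + 1 : ℕ) : ℝ) := by
    rintro t ⟨μ, h1, h2, h3, rfl⟩
    exact sys3wt_le_of_prob hn h1 h3
  exact le_antisymm (csSup_le ⟨_, hmem⟩ hub) (le_csSup ⟨_, hub⟩ hmem)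
end

section
/- The 3-cosystole of the cographic matroid M*(K_{3,3}) equals 4/3: sys₃*(M*(K_{3,3})) = 4/3. -/
open Set

variable {α V : Type*}

/-! ### Auxiliary material for `stmt8` -/

namespace Stmt8Aux

open SimpleGraph

abbrev GG := completeBipartiteGraph (Fin 3) (Fin 3)
abbrev va (i : Fin 3) : Fin 3 ⊕ Fin 3 := Sum.inl i
abbrev vb (j : Fin 3) : Fin 3 ⊕ Fin 3 := Sum.inr j
abbrev ed (i j : Fin 3) : Sym2 (Fin 3 ⊕ Fin 3) := s(va i, vb j)

lemma adjab (i j : Fin 3) : GG.Adj (va i) (vb j) := Or.inl ⟨rfl, rfl⟩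
lemma adjba (i j : Fin 3) : GG.Adj (vb j) (va i) := Or.inr ⟨rfl, rfl⟩

def W4 (i i' j j' : Fin 3) : GG.Walk (va i) (va i) :=
  .cons (adjab i j) (.cons (adjba i' j) (.cons (adjab i' j') (.cons (adjba i j') .nil)))

lemma W4_edges (i i' j j' : Fin 3) :
    (W4 i i' j j').edges = [s(va i, vb j), s(vb j, va i'), s(va i', vb j'), s(vb j', va i)] := rfl

lemma W4_cyc {i i' j j' : Fin 3} (hi : i ≠ i') (hj : j ≠ j') : (W4 i i' j j').IsCycle := by
  simp [Walk.isCycle_def, Walk.isTrail_def, W4, Walk.support, Sym2.eq, Sym2.rel_iff']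
  aesop

/-- The 4-cycle avoiding row `i` and column `j`. -/
def Cs (i j : Fin 3) : Set (Sym2 (Fin 3 ⊕ Fin 3)) :=
  {x | x ∈ (W4 (i+1) (i+2) (j+1) (j+2)).edges}

def Fs (i j : Fin 3) : Finset (Sym2 (Fin 3 ⊕ Fin 3)) :=
  {ed (i+1) (j+1), ed (i+2) (j+1), ed (i+2) (j+2), ed (i+1) (j+2)}

lemma Cs_eq (i j : Fin 3) : Cs i j = ↑(Fs i j) := by
  rw [Cs, W4_edges]; ext e; simp [Fs, Sym2.eq_swap]

lemma Cs_isCycleSet (i j : Fin 3) : IsCycleSet GG (Cs i j) :=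
  ⟨_, _, W4_cyc (by fin_cases i <;> decide) (by fin_cases j <;> decide), rfl⟩

lemma wt_coe (μ : Sym2 (Fin 3 ⊕ Fin 3) → ℝ) (s : Finset (Sym2 (Fin 3 ⊕ Fin 3))) :
    wt μ ↑s = ∑ x ∈ s, μ x :=
  finsum_mem_coe_finset μ s

lemma wt_Cs (μ : Sym2 (Fin 3 ⊕ Fin 3) → ℝ) (i j : Fin 3) :
    wt μ (Cs i j) = μ (ed (i+1) (j+1)) + μ (ed (i+2) (j+1)) + μ (ed (i+2) (j+2))
      + μ (ed (i+1) (j+2)) := by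
  rw [Cs_eq, wt_coe, Fs]
  fin_cases i <;> fin_cases j <;>
    rw [Finset.sum_insert (by decide), Finset.sum_insert (by decide),
      Finset.sum_insert (by decide), Finset.sum_singleton] <;> ring

def allE : Finset (Sym2 (Fin 3 ⊕ Fin 3)) :=
  {ed 0 0, ed 0 1, ed 0 2, ed 1 0, ed 1 1, ed 1 2, ed 2 0, ed 2 1, ed 2 2}

lemma edgeSet_eq : GG.edgeSet = ↑allE := by
  ext e
  induction e using Sym2.ind with
  | _ x y =>
    simp only [mem_edgeSet, completeBipartiteGraph_adj]
    constructor
    · rintro (⟨h1, h2⟩ | ⟨h1, h2⟩)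
      · obtain ⟨i, rfl⟩ := Sum.isLeft_iff.mp h1
        obtain ⟨j, rfl⟩ := Sum.isRight_iff.mp h2
        fin_cases i <;> fin_cases j <;> decide
      · obtain ⟨j, rfl⟩ := Sum.isRight_iff.mp h1
        obtain ⟨i, rfl⟩ := Sum.isLeft_iff.mp h2
        fin_cases i <;> fin_cases j <;> decide
    · intro h
      rw [Finset.mem_coe] at h
      simp only [allE, Finset.mem_insert, Finset.mem_singleton, Sym2.eq_iff] at h
      rcases h with h|h|h|h|h|h|h|h|h <;> rcases h with ⟨rfl,rfl⟩|⟨rfl,rfl⟩ <;> simp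

lemma wt_E (μ : Sym2 (Fin 3 ⊕ Fin 3) → ℝ) :
    wt μ GG.edgeSet = μ (ed 0 0) + μ (ed 0 1) + μ (ed 0 2) + μ (ed 1 0) + μ (ed 1 1)
      + μ (ed 1 2) + μ (ed 2 0) + μ (ed 2 1) + μ (ed 2 2) := by
  rw [edgeSet_eq, wt_coe, allE]
  repeat rw [Finset.sum_insert (by decide)]
  rw [Finset.sum_singleton]; ring

lemma adj_isLeft {u v : Fin 3 ⊕ Fin 3} (h : GG.Adj u v) : u.isLeft = !v.isLeft := by
  rcases h with ⟨h1, h2⟩ | ⟨h1, h2⟩ <;> cases u <;> cases v <;> simp_all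

lemma walk_parity {u v : Fin 3 ⊕ Fin 3} (w : GG.Walk u v) :
    (u.isLeft = v.isLeft) ↔ Even w.length := by
  induction w with
  | nil => simp
  | @cons u x v h p ih =>
    rw [adj_isLeft h, Walk.length_cons, Nat.even_add_one, ← ih]
    cases hx : x.isLeft <;> cases hv : v.isLeft <;> simp

lemma cycle_four_le {v : Fin 3 ⊕ Fin 3} {w : GG.Walk v v} (h : w.IsCycle) : 4 ≤ w.length := by
  have h3 := h.three_le_length
  have he : Even w.length := (walk_parity w).mp rfl
  rcases he with ⟨k, hk⟩
  omega

/-- The uniform probability distribution on the edges. -/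
noncomputable def μu : Sym2 (Fin 3 ⊕ Fin 3) → ℝ :=
  fun e => if e ∈ allE then 1/9 else 0

lemma μu_ed (i j : Fin 3) : μu (ed i j) = 1/9 := by
  have : ed i j ∈ allE := by fin_cases i <;> fin_cases j <;> decide
  simp [μu, this]

lemma cyc_wt {C : Set (Sym2 (Fin 3 ⊕ Fin 3))} (hC : IsCycleSet GG C) : 4/9 ≤ wt μu C := by
  obtain ⟨v, w, hcyc, rfl⟩ := hC
  have hset : {e | e ∈ w.edges} = ↑w.edges.toFinset := by ext e; simp
  rw [hset, wt, finsum_mem_coe_finset]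
  have hcard : w.edges.toFinset.card = w.length := by
    rw [List.toFinset_card_of_nodup hcyc.edges_nodup, w.length_edges]
  have hterm : ∀ e ∈ w.edges.toFinset, μu e = 1/9 := by
    intro e he
    rw [List.mem_toFinset] at he
    have : e ∈ allE := by rw [← Finset.mem_coe, ← edgeSet_eq]; exact w.edges_subset_edgeSet he
    simp [μu, this]
  rw [Finset.sum_congr rfl hterm, Finset.sum_const, hcard, nsmul_eq_mul]
  have h4 := cycle_four_le hcyc
  have : (4:ℝ) ≤ (w.length : ℝ) := by exact_mod_cast h4
  linarith

lemma nonincl_coe {F1 F2 F3 : Finset (Sym2 (Fin 3 ⊕ Fin 3))}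
    (h1 : ¬ F1 ⊆ F2 ∪ F3) (h2 : ¬ F2 ⊆ F1 ∪ F3) (h3 : ¬ F3 ⊆ F1 ∪ F2) :
    NonIncl (↑F1 : Set (Sym2 (Fin 3 ⊕ Fin 3))) ↑F2 ↑F3 := by
  refine ⟨?_, ?_, ?_⟩ <;> rw [← Finset.coe_union, Finset.coe_subset] <;> assumption

lemma nonincl_Cs {j0 j1 j2 : Fin 3} (h0 : j0 ≠ j1) (h1 : j1 ≠ j2) (h2 : j0 ≠ j2) :
    NonIncl (Cs 0 j0) (Cs 1 j1) (Cs 2 j2) := by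
  rw [Cs_eq, Cs_eq, Cs_eq]
  fin_cases j0 <;> fin_cases j1 <;> fin_cases j2 <;> simp_all <;>
    exact nonincl_coe (by decide) (by decide) (by decide)

lemma wt_nonneg (μ : Sym2 (Fin 3 ⊕ Fin 3) → ℝ) (h0 : ∀ e, 0 ≤ μ e)
    (X : Set (Sym2 (Fin 3 ⊕ Fin 3))) : 0 ≤ wt μ X := by
  have hX : X.Finite := Set.toFinite X
  rw [← hX.coe_toFinset, wt, finsum_mem_coe_finset]
  exact Finset.sum_nonneg fun e _ => h0 e

/-- Fin 3 addition facts used for normalization. -/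
lemma fin_add_facts : ((0:Fin 3)+1 = 1) ∧ ((0:Fin 3)+2 = 2) ∧ ((1:Fin 3)+1 = 2) ∧
    ((1:Fin 3)+2 = 0) ∧ ((2:Fin 3)+1 = 0) ∧ ((2:Fin 3)+2 = 1) := by decide

end Stmt8Aux

open Stmt8Aux in
/-- The 3-cosystole of the cographic matroid `M*(K_{3,3})` (whose ground set is the
edge set of `K_{3,3}` and whose cocircuits are the cycles of `K_{3,3}`) equals `4/3`. -/
theorem stmt8 :
    sys3P (completeBipartiteGraph (Fin 3) (Fin 3)).edgeSet
      (IsCycleSet (completeBipartiteGraph (Fin 3) (Fin 3))) = 4 / 3 := by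
  obtain ⟨f01, f02, f11, f12, f21, f22⟩ := fin_add_facts
  -- the six non-inclusion transversal triples
  have n012 := nonincl_Cs (j0 := 0) (j1 := 1) (j2 := 2) (by decide) (by decide) (by decide)
  have n021 := nonincl_Cs (j0 := 0) (j1 := 2) (j2 := 1) (by decide) (by decide) (by decide)
  have n102 := nonincl_Cs (j0 := 1) (j1 := 0) (j2 := 2) (by decide) (by decide) (by decide)
  have n120 := nonincl_Cs (j0 := 1) (j1 := 2) (j2 := 0) (by decide) (by decide) (by decide)
  have n201 := nonincl_Cs (j0 := 2) (j1 := 0) (j2 := 1) (by decide) (by decide) (by decide)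
  have n210 := nonincl_Cs (j0 := 2) (j1 := 1) (j2 := 0) (by decide) (by decide) (by decide)
  -- upper bound: for every admissible μ, the weighted cosystole is at most 4/3
  have hub : ∀ μ : Sym2 (Fin 3 ⊕ Fin 3) → ℝ, (∀ e, 0 ≤ μ e) → wt μ GG.edgeSet = 1 →
      sys3wtP μ (IsCycleSet GG) ≤ 4/3 := by
    intro μ h0 hE
    set S := {s | ∃ C₁ C₂ C₃, IsCycleSet GG C₁ ∧ IsCycleSet GG C₂ ∧ IsCycleSet GG C₃ ∧
      NonIncl C₁ C₂ C₃ ∧ s = wt μ C₁ + wt μ C₂ + wt μ C₃} with hS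
    have hbb : BddBelow S := by
      refine ⟨0, fun s hs => ?_⟩
      obtain ⟨C1, C2, C3, _, _, _, _, rfl⟩ := hs
      have := wt_nonneg μ h0 C1; have := wt_nonneg μ h0 C2; have := wt_nonneg μ h0 C3
      linarith
    have hmem : ∀ j0 j1 j2 : Fin 3, NonIncl (Cs 0 j0) (Cs 1 j1) (Cs 2 j2) →
        wt μ (Cs 0 j0) + wt μ (Cs 1 j1) + wt μ (Cs 2 j2) ∈ S :=
      fun j0 j1 j2 hn => ⟨_, _, _, Cs_isCycleSet 0 j0, Cs_isCycleSet 1 j1,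
        Cs_isCycleSet 2 j2, hn, rfl⟩
    have hle : ∀ j0 j1 j2 : Fin 3, NonIncl (Cs 0 j0) (Cs 1 j1) (Cs 2 j2) →
        sys3wtP μ (IsCycleSet GG) ≤ wt μ (Cs 0 j0) + wt μ (Cs 1 j1) + wt μ (Cs 2 j2) :=
      fun j0 j1 j2 hn => csInf_le hbb (hmem j0 j1 j2 hn)
    by_contra hcon
    push_neg at hcon
    have t1 := (hle 0 1 2 n012).trans_lt' hcon
    have t2 := (hle 0 2 1 n021).trans_lt' hcon
    have t3 := (hle 1 0 2 n102).trans_lt' hcon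
    have t4 := (hle 1 2 0 n120).trans_lt' hcon
    have t5 := (hle 2 0 1 n201).trans_lt' hcon
    have t6 := (hle 2 1 0 n210).trans_lt' hcon
    have e00 := wt_Cs μ 0 0; have e01 := wt_Cs μ 0 1; have e02 := wt_Cs μ 0 2
    have e10 := wt_Cs μ 1 0; have e11 := wt_Cs μ 1 1; have e12 := wt_Cs μ 1 2
    have e20 := wt_Cs μ 2 0; have e21 := wt_Cs μ 2 1; have e22 := wt_Cs μ 2 2
    simp only [f01, f02, f11, f12, f21, f22] at e00 e01 e02 e10 e11 e12 e20 e21 e22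
    rw [wt_E μ] at hE
    linarith
  -- the uniform distribution achieves exactly 4/3
  have hunif : sys3wtP μu (IsCycleSet GG) = 4/3 := by
    set S := {s | ∃ C₁ C₂ C₃, IsCycleSet GG C₁ ∧ IsCycleSet GG C₂ ∧ IsCycleSet GG C₃ ∧
      NonIncl C₁ C₂ C₃ ∧ s = wt μu C₁ + wt μu C₂ + wt μu C₃} with hS
    have hlb : ∀ s ∈ S, 4/3 ≤ s := by
      rintro s ⟨C1, C2, C3, h1, h2, h3, _, rfl⟩
      have := cyc_wt h1; have := cyc_wt h2; have := cyc_wt h3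
      linarith
    have hval : wt μu (Cs 0 0) + wt μu (Cs 1 1) + wt μu (Cs 2 2) = 4/3 := by
      rw [wt_Cs, wt_Cs, wt_Cs]
      simp only [μu_ed]; norm_num
    have hmem : (4:ℝ)/3 ∈ S := ⟨_, _, _, Cs_isCycleSet 0 0, Cs_isCycleSet 1 1,
      Cs_isCycleSet 2 2, n012, hval.symm⟩
    exact le_antisymm (csInf_le ⟨4/3, hlb⟩ hmem) (le_csInf ⟨_, hmem⟩ hlb)
  -- assemble
  set T := {t | ∃ μ : Sym2 (Fin 3 ⊕ Fin 3) → ℝ, (∀ e, 0 ≤ μ e) ∧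
    (∀ e ∉ GG.edgeSet, μ e = 0) ∧ wt μ GG.edgeSet = 1 ∧ t = sys3wtP μ (IsCycleSet GG)} with hT
  have hE1 : wt μu GG.edgeSet = 1 := by
    rw [wt_E]; simp only [μu_ed]; norm_num
  have hmemT : (4:ℝ)/3 ∈ T := by
    refine ⟨μu, fun e => ?_, fun e he => ?_, hE1, hunif.symm⟩
    · unfold μu; split <;> norm_num
    · rw [edgeSet_eq, Finset.mem_coe] at he
      simp [μu, he]
    
  have hubT : ∀ t ∈ T, t ≤ 4/3 := by
    rintro t ⟨μ, h0, _, hE, rfl⟩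
    exact hub μ h0 hE
  exact le_antisymm (csSup_le ⟨_, hmemT⟩ hubT) (le_csSup ⟨4/3, hubT⟩ hmemT)
end

section
/- Parallel elements and cocircuits: if {e, f} is a circuit of a matroid M (i.e., e and f are parallel), then every cocircuit of M contains e if and only if it contains f. Moreover, if μ is a probability distribution on E(M) and μ₊ is defined on E(M) − {e} by μ₊(f) = μ(e) + μ(f) and μ₊ = μ otherwise, then for every cocircuit C* of M \ e there is a cocircuit C̃* of M with μ(C̃*) = μ₊(C*), and consequently sys₃*(M, μ) ≤ sys₃*(M \ e, μ₊), so sys₃*(M) ≤ sys₃*(M \ e). -/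
open Set

variable {α : Type*}

/-- A circuit of a matroid: a minimal dependent set. -/
def Matroid.Circuit (M : Matroid α) (C : Set α) : Prop :=
  M.Dep C ∧ ∀ ⦃D⦄, M.Dep D → D ⊆ C → D = C

/-- A cocircuit: a circuit of the dual matroid. -/
def Matroid.Cocircuit (M : Matroid α) (C : Set α) : Prop :=
  M✶.Circuit C

/-- A coloop: a loop of the dual matroid. -/
def Matroid.Coloop (M : Matroid α) (e : α) : Prop :=
  M✶.Dep {e}

/-- A loop: an element whose singleton is dependent. -/
def Matroid.Loop (M : Matroid α) (e : α) : Prop :=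
  M.Dep {e}

/-- Deletion of a set of elements. -/
def Matroid.deleteSet (M : Matroid α) (D : Set α) : Matroid α :=
  M.restrict (M.E \ D)

/-- Contraction of a set of elements, via duality. -/
def Matroid.contractSet (M : Matroid α) (C : Set α) : Matroid α :=
  (M✶.deleteSet C)✶

/-- `μ` is a probability distribution on the ground set of `M`. -/
def Matroid.IsProb (M : Matroid α) (μ : α → ℝ) : Prop :=
  (∀ e, 0 ≤ μ e) ∧ (∀ e ∉ M.E, μ e = 0) ∧ wt μ M.E = 1

/-- The weighted 3-cosystole: the minimum total weight of a triple of cocircuits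
with the non-inclusion property. -/
noncomputable def Matroid.sys3wt (M : Matroid α) (μ : α → ℝ) : ℝ :=
  sInf {s | ∃ C₁ C₂ C₃, M.Cocircuit C₁ ∧ M.Cocircuit C₂ ∧ M.Cocircuit C₃ ∧
    NonIncl C₁ C₂ C₃ ∧ s = wt μ C₁ + wt μ C₂ + wt μ C₃}

/-- The 3-cosystole: the maximum of the weighted 3-cosystole over probability
distributions on the ground set. -/
noncomputable def Matroid.sys3 (M : Matroid α) : ℝ :=
  sSup {t | ∃ μ, M.IsProb μ ∧ t = M.sys3wt μ}

namespace StmtAux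

open Matroid

variable {M : Matroid α} {e f : α} {B C D X : Set α}

lemma pair_mem_left (hpar : M.Circuit {e, f}) : e ∈ M.E :=
  hpar.1.subset_ground (by simp)

lemma pair_mem_right (hpar : M.Circuit {e, f}) : f ∈ M.E :=
  hpar.1.subset_ground (by simp)

lemma pair_symm (hpar : M.Circuit {e, f}) : M.Circuit {f, e} := by
  rwa [Set.pair_comm] at hpar

lemma pair_indep_left (hef : e ≠ f) (hpar : M.Circuit {e, f}) : M.Indep {e} := by
  by_contra h
  have hdep : M.Dep {e} :=
    (M.not_indep_iff (Set.singleton_subset_iff.2 (pair_mem_left hpar))).1 h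
  have := hpar.2 hdep (by simp)
  have : f ∈ ({e} : Set α) := this ▸ (by simp : f ∈ ({e, f} : Set α))
  exact hef (Set.mem_singleton_iff.1 this).symm

lemma pair_indep_right (hef : e ≠ f) (hpar : M.Circuit {e, f}) : M.Indep {f} :=
  pair_indep_left hef.symm (pair_symm hpar)

lemma not_both_mem_indep (hpar : M.Circuit {e, f}) (hI : M.Indep X) (heX : e ∈ X)
    (hfX : f ∈ X) : False := by
  have : M.Indep {e, f} := hI.subset (by rw [Set.insert_subset_iff]; exact ⟨heX, by simpa⟩)
  exact hpar.1.not_indep this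

/-- Swapping a parallel element in a base. -/
lemma base_swap (hef : e ≠ f) (hpar : M.Circuit {e, f}) (hB : M.IsBase B) (heB : e ∈ B) :
    M.IsBase (insert f (B \ {e})) := by
  have hfB : f ∉ B := fun hfB => not_both_mem_indep hpar hB.indep heB hfB
  have hJ : M.Indep (B \ {e}) := hB.indep.subset Set.diff_subset
  have hind : M.Indep (insert f (B \ {e})) := by
    by_contra hdep
    have hfe : f ∈ M.E := pair_mem_right hpar
    have hdep' : M.Dep (insert f (B \ {e})) :=
      (M.not_indep_iff (Set.insert_subset hfe (Set.diff_subset.trans hB.subset_ground))).1 hdep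
    have hfcl : f ∈ M.closure (B \ {e}) := hJ.mem_closure_iff.2 (Or.inl hdep')
    have hecl : e ∈ M.closure {f} := by
      refine (pair_indep_right hef hpar).mem_closure_iff.2 (Or.inl ?_)
      have : insert e {f} = ({e, f} : Set α) := rfl
      rw [this]; exact hpar.1
    have hsub : M.closure {f} ⊆ M.closure (B \ {e}) :=
      M.closure_subset_closure_of_subset_closure (Set.singleton_subset_iff.2 hfcl)
    have : e ∈ M.closure (B \ {e}) := hsub hecl
    rcases hJ.mem_closure_iff.1 this with hdepB | heJ
    · rw [Set.insert_diff_singleton, Set.insert_eq_of_mem heB] at hdepB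
      exact hdepB.not_indep hB.indep
    · exact heJ.2 rfl
  exact hB.exchange_isBase_of_indep hfB hind

/-- A set is dependent in the dual iff it meets every base (and is in the ground set). -/
lemma codep_iff : M✶.Dep X ↔ (∀ B, M.IsBase B → (X ∩ B).Nonempty) ∧ X ⊆ M.E :=
  Matroid.dual_dep_iff_forall

/-- Bases of `M \ e` are the bases of `M` avoiding `e`. -/
lemma base_delete_iff (hef : e ≠ f) (hpar : M.Circuit {e, f}) :
    (M.deleteSet {e}).IsBase B ↔ M.IsBase B ∧ e ∉ B := by
  rw [Matroid.deleteSet]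
  constructor
  · intro hB
    have hmax := (Matroid.isBase_iff_maximal_indep.1 hB)
    have hBi : M.Indep B ∧ B ⊆ M.E \ {e} := Matroid.restrict_indep_iff.1 hmax.1
    have heB : e ∉ B := fun h => (hBi.2 h).2 rfl
    obtain ⟨B₀, hB₀, hBB₀⟩ := hBi.1.exists_isBase_superset
    by_cases he : e ∈ B₀
    · have hB₁ : M.IsBase (insert f (B₀ \ {e})) := base_swap hef hpar hB₀ he
      have hsub : B ⊆ insert f (B₀ \ {e}) :=
        fun x hx => Set.mem_insert_iff.2 (Or.inr ⟨hBB₀ hx, fun hxe => heB (hxe ▸ hx)⟩)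
      have hind : (M.restrict (M.E \ {e})).Indep (insert f (B₀ \ {e})) := by
        refine Matroid.restrict_indep_iff.2 ⟨hB₁.indep, ?_⟩
        refine Set.insert_subset ⟨pair_mem_right hpar, hef.symm⟩ ?_
        exact fun x hx => ⟨hB₀.subset_ground hx.1, hx.2⟩
      have := hmax.2 hind hsub
      have hBeq : B = insert f (B₀ \ {e}) := Set.Subset.antisymm hsub this
      exact ⟨hBeq ▸ hB₁, heB⟩
    · have hind : (M.restrict (M.E \ {e})).Indep B₀ :=
        Matroid.restrict_indep_iff.2 ⟨hB₀.indep, fun x hx => ⟨hB₀.subset_ground hx,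
          fun hxe => he (hxe ▸ hx)⟩⟩
      have := hmax.2 hind hBB₀
      exact ⟨(Set.Subset.antisymm hBB₀ this) ▸ hB₀, heB⟩
  · rintro ⟨hB, heB⟩
    refine Matroid.isBase_iff_maximal_indep.2 ⟨Matroid.restrict_indep_iff.2
      ⟨hB.indep, fun x hx => ⟨hB.subset_ground hx, fun hxe => heB (hxe ▸ hx)⟩⟩, ?_⟩
    intro I hI hBI
    have hIi : M.Indep I := (Matroid.restrict_indep_iff.1 hI).1
    have := (Matroid.isBase_iff_maximal_indep.1 hB).2 hIi hBI
    exact this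

lemma delete_codep_iff (hef : e ≠ f) (hpar : M.Circuit {e, f}) :
    (M.deleteSet {e})✶.Dep X ↔
      (∀ B, M.IsBase B → e ∉ B → (X ∩ B).Nonempty) ∧ X ⊆ M.E \ {e} := by
  rw [Matroid.dual_dep_iff_forall]
  constructor
  · rintro ⟨h1, h2⟩
    refine ⟨fun B hB heB => h1 B ((base_delete_iff hef hpar).2 ⟨hB, heB⟩), ?_⟩
    simpa [Matroid.deleteSet] using h2
  · rintro ⟨h1, h2⟩
    refine ⟨fun B hB => ?_, by simpa [Matroid.deleteSet] using h2⟩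
    obtain ⟨hB, heB⟩ := (base_delete_iff hef hpar).1 hB
    exact h1 B hB heB

/-- Bridging: if `f ∉ X`, meeting all `e`-free bases implies meeting all bases. -/
lemma meets_all_of_meets_efree (hef : e ≠ f) (hpar : M.Circuit {e, f}) (hfX : f ∉ X)
    (h : ∀ B, M.IsBase B → e ∉ B → (X ∩ B).Nonempty) :
    ∀ B, M.IsBase B → (X ∩ B).Nonempty := by
  intro B hB
  by_cases heB : e ∈ B
  · have hB' : M.IsBase (insert f (B \ {e})) := base_swap hef hpar hB heB
    have heB' : e ∉ insert f (B \ {e}) := by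
      simp only [Set.mem_insert_iff]
      rintro (rfl | h'); exact hef rfl; exact h'.2 rfl
    obtain ⟨x, hxX, hxB'⟩ := h _ hB' heB'
    rcases Set.mem_insert_iff.1 hxB' with rfl | hx
    · exact absurd hxX hfX
    · exact ⟨x, hxX, hx.1⟩
  · exact h B hB heB

lemma meets_all_insert_of_meets_efree (h : ∀ B, M.IsBase B → e ∉ B → (X ∩ B).Nonempty) :
    ∀ B, M.IsBase B → ((insert e X) ∩ B).Nonempty := by
  intro B hB
  by_cases heB : e ∈ B
  · exact ⟨e, Set.mem_insert _ _, heB⟩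
  · obtain ⟨x, hx, hxB⟩ := h B hB heB
    exact ⟨x, Set.mem_insert_of_mem _ hx, hxB⟩

lemma meets_efree_of_meets_all (h : ∀ B, M.IsBase B → (X ∩ B).Nonempty) :
    ∀ B, M.IsBase B → e ∉ B → ((X \ {e}) ∩ B).Nonempty := by
  intro B hB heB
  obtain ⟨x, hx, hxB⟩ := h B hB
  exact ⟨x, ⟨hx, fun hxe => heB (hxe ▸ hxB)⟩, hxB⟩

/-- One direction of the parallel-cocircuit lemma. -/
lemma cocirc_mem_of_mem (hef : e ≠ f) (hpar : M.Circuit {e, f}) (hC : M.Cocircuit C)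
    (heC : e ∈ C) : f ∈ C := by
  by_contra hfC
  have hCE : C ⊆ M.E := (codep_iff.1 hC.1).2
  -- C \ {e} is coindependent
  have hne : C \ {e} ≠ C := fun h => (h ▸ (fun (hh : e ∈ C \ {e}) => hh.2 rfl)) heC
  have hnotdep : ¬ M✶.Dep (C \ {e}) := fun hd => hne (hC.2 hd Set.diff_subset)
  have hindep : M✶.Indep (C \ {e}) := by
    rw [← Matroid.not_dep_iff (by rw [Matroid.dual_ground]; exact Set.diff_subset.trans hCE)]
    exact hnotdep
  obtain ⟨-, B, hB, hdisj⟩ := Matroid.dual_indep_iff_exists'.1 hindep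
  -- C meets B, necessarily in e
  obtain ⟨x, hxC, hxB⟩ := (codep_iff.1 hC.1).1 B hB
  have hxe : x = e := by
    by_contra hxe
    exact hdisj.ne_of_mem ⟨hxC, hxe⟩ hxB rfl
  subst hxe
  -- swap to get a base disjoint from C
  have hB' : M.IsBase (insert f (B \ {x})) := base_swap hef hpar hB hxB
  obtain ⟨y, hyC, hyB'⟩ := (codep_iff.1 hC.1).1 _ hB'
  rcases Set.mem_insert_iff.1 hyB' with rfl | hy
  · exact hfC hyC
  · exact hdisj.ne_of_mem ⟨hyC, hy.2⟩ hy.1 rfl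

lemma cocirc_mem_iff (hef : e ≠ f) (hpar : M.Circuit {e, f}) (hC : M.Cocircuit C) :
    e ∈ C ↔ f ∈ C :=
  ⟨cocirc_mem_of_mem hef hpar hC,
    cocirc_mem_of_mem hef.symm (pair_symm hpar) hC⟩

/-- Any dependent set in a matroid with finite ground set contains a circuit. -/
lemma exists_circuit_subset {N : Matroid α} {X : Set α} (hXfin : X.Finite) (hX : N.Dep X) :
    ∃ C, C ⊆ X ∧ N.Circuit C := by
  obtain ⟨n, hn⟩ : ∃ n, X.ncard = n := ⟨_, rfl⟩
  induction n using Nat.strong_induction_on generalizing X with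
  | _ n ih =>
    by_cases h : ∀ D, N.Dep D → D ⊆ X → D = X
    · exact ⟨X, Set.Subset.rfl, hX, h⟩
    · push_neg at h
      obtain ⟨D, hD, hDX, hne⟩ := h
      have hss : D ⊂ X := Set.ssubset_iff_subset_ne.2 ⟨hDX, hne⟩
      have hlt : D.ncard < n := hn ▸ Set.ncard_lt_ncard hss hXfin
      obtain ⟨C, hCD, hC⟩ := ih _ hlt (hXfin.subset hDX) hD rfl
      exact ⟨C, hCD.trans hDX, hC⟩

lemma cocirc_subset_ground (hC : M.Cocircuit C) : C ⊆ M.E :=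
  (codep_iff.1 hC.1).2

/-- Cocircuits of `M \ e` not containing `f` are cocircuits of `M`. -/
lemma cocirc_of_del_cocirc_not_mem (hef : e ≠ f) (hpar : M.Circuit {e, f})
    (hC : (M.deleteSet {e}).Cocircuit C) (hfC : f ∉ C) : M.Cocircuit C := by
  obtain ⟨h1, h2⟩ := (delete_codep_iff hef hpar).1 hC.1
  refine ⟨codep_iff.2 ⟨meets_all_of_meets_efree hef hpar hfC h1, h2.trans Set.diff_subset⟩, ?_⟩
  intro D hD hDC
  have hDE : D ⊆ M.E \ {e} := hDC.trans h2
  have hDdel : (M.deleteSet {e})✶.Dep D := (delete_codep_iff hef hpar).2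
    ⟨fun B hB _ => (codep_iff.1 hD).1 B hB, hDE⟩
  exact hC.2 hDdel hDC

/-- Cocircuits of `M \ e` containing `f` give cocircuits of `M` after inserting `e`. -/
lemma cocirc_of_del_cocirc_mem (hfin : M.E.Finite) (hef : e ≠ f) (hpar : M.Circuit {e, f})
    (hC : (M.deleteSet {e}).Cocircuit C) (hfC : f ∈ C) : M.Cocircuit (insert e C) := by
  obtain ⟨h1, h2⟩ := (delete_codep_iff hef hpar).1 hC.1
  have heC : e ∉ C := fun h => (h2 h).2 rfl
  refine ⟨codep_iff.2 ⟨meets_all_insert_of_meets_efree h1,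
    Set.insert_subset (pair_mem_left hpar) (h2.trans Set.diff_subset)⟩, ?_⟩
  intro D hD hDC
  by_cases heD : e ∈ D
  · -- D \ {e} is codependent in M \ e and contained in C
    have hD0 : (M.deleteSet {e})✶.Dep (D \ {e}) := by
      refine (delete_codep_iff hef hpar).2 ⟨meets_efree_of_meets_all (codep_iff.1 hD).1, ?_⟩
      refine fun x hx => ⟨(codep_iff.1 hD).2 hx.1, hx.2⟩
    have hsub : D \ {e} ⊆ C := by
      intro x hx
      rcases Set.mem_insert_iff.1 (hDC hx.1) with rfl | h
      · exact absurd rfl hx.2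
      · exact h
    have := hC.2 hD0 hsub
    rw [← this, Set.insert_diff_singleton, Set.insert_eq_of_mem heD]
  · -- impossible: would give a cocircuit of M inside C avoiding e and f
    exfalso
    have hDC' : D ⊆ C := fun x hx => (Set.mem_insert_iff.1 (hDC hx)).elim
      (fun h => absurd (h ▸ hx) heD) id
    have hDdel : (M.deleteSet {e})✶.Dep D := (delete_codep_iff hef hpar).2
      ⟨fun B hB _ => (codep_iff.1 hD).1 B hB, hDC'.trans h2⟩
    have hDC'' := hC.2 hDdel hDC'
    subst hDC''
    -- now D itself is codependent in M; extract a cocircuit C' ⊆ D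
    have hDfin : D.Finite := hfin.subset (codep_iff.1 hD).2
    obtain ⟨C', hC'D, hC'⟩ := exists_circuit_subset (N := M✶) hDfin hD
    have heC' : e ∉ C' := fun h => heD (hC'D h)
    have hfC' : f ∉ C' := fun h => heC' ((cocirc_mem_iff hef hpar hC').2 h)
    have hC'del : (M.deleteSet {e})✶.Dep C' := (delete_codep_iff hef hpar).2
      ⟨fun B hB _ => (codep_iff.1 hC'.1).1 B hB,
        fun x hx => ⟨(codep_iff.1 hC'.1).2 hx, fun hxe => heC' (hxe ▸ hx)⟩⟩
    have := hC.2 hC'del hC'D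
    exact hfC' (this ▸ hfC)

/-- Cocircuits of `M` give cocircuits of `M \ e` by removing `e`. -/
lemma del_cocirc_of_cocirc (hef : e ≠ f) (hpar : M.Circuit {e, f}) (hC : M.Cocircuit C) :
    (M.deleteSet {e}).Cocircuit (C \ {e}) := by
  have hCE := cocirc_subset_ground hC
  refine ⟨(delete_codep_iff hef hpar).2 ⟨meets_efree_of_meets_all (codep_iff.1 hC.1).1,
    fun x hx => ⟨hCE hx.1, hx.2⟩⟩, ?_⟩
  intro D hD hDC
  obtain ⟨h1, h2⟩ := (delete_codep_iff hef hpar).1 hD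
  have heD : e ∉ D := fun h => (h2 h).2 rfl
  by_cases heC : e ∈ C
  · have hfC : f ∈ C := cocirc_mem_of_mem hef hpar hC heC
    by_cases hfD : f ∈ D
    · have hdep : M✶.Dep (insert e D) := codep_iff.2
        ⟨meets_all_insert_of_meets_efree h1,
          Set.insert_subset (pair_mem_left hpar) (h2.trans Set.diff_subset)⟩
      have hsub : insert e D ⊆ C := Set.insert_subset heC (hDC.trans Set.diff_subset)
      have := hC.2 hdep hsub
      rw [← this, Set.insert_diff_self_of_notMem heD]
    · have hdep : M✶.Dep D := codep_iff.2
        ⟨meets_all_of_meets_efree hef hpar hfD h1, h2.trans Set.diff_subset⟩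
      have := hC.2 hdep (hDC.trans Set.diff_subset)
      exact absurd (this ▸ heC) heD
  · have hfC : f ∉ C := fun h => heC ((cocirc_mem_iff hef hpar hC).2 h)
    have hfD : f ∉ D := fun h => hfC (Set.diff_subset (hDC h))
    have hdep : M✶.Dep D := codep_iff.2
      ⟨meets_all_of_meets_efree hef hpar hfD h1, h2.trans Set.diff_subset⟩
    have := hC.2 hdep (hDC.trans Set.diff_subset)
    rw [this, Set.diff_singleton_eq_self heC]

/-! ### Weight lemmas -/

lemma wt_eq_sum {X : Set α} (hX : X.Finite) (μ : α → ℝ) :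
    wt μ X = ∑ x ∈ hX.toFinset, μ x := by
  rw [wt, ← finsum_mem_coe_finset, Set.Finite.coe_toFinset]

lemma wt_congr {X : Set α} {μ ν : α → ℝ} (h : ∀ x ∈ X, μ x = ν x) : wt μ X = wt ν X :=
  finsum_mem_congr rfl h

lemma wt_nonneg {X : Set α} (hX : X.Finite) {μ : α → ℝ} (hμ : ∀ x, 0 ≤ μ x) : 0 ≤ wt μ X := by
  rw [wt_eq_sum hX]
  exact Finset.sum_nonneg fun x _ => hμ x

lemma wt_mono {X Y : Set α} (hY : Y.Finite) (hXY : X ⊆ Y) {μ : α → ℝ} (hμ : ∀ x, 0 ≤ μ x) :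
    wt μ X ≤ wt μ Y := by
  rw [wt_eq_sum (hY.subset hXY), wt_eq_sum hY]
  refine Finset.sum_le_sum_of_subset_of_nonneg ?_ fun i _ _ => hμ i
  intro x hx
  rw [Set.Finite.mem_toFinset] at hx ⊢
  exact hXY hx

lemma wt_insert [DecidableEq α] {X : Set α} (hX : X.Finite) (heX : e ∉ X) (μ : α → ℝ) :
    wt μ (insert e X) = μ e + wt μ X := by
  rw [wt_eq_sum (hX.insert e), wt_eq_sum hX]
  have hfs : (hX.insert e).toFinset = insert e hX.toFinset := by
    ext x; simp
  rw [hfs, Finset.sum_insert (by simpa using heX)]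

lemma wt_shift [DecidableEq α] {X : Set α} (hX : X.Finite) (hfX : f ∈ X) (μ : α → ℝ) :
    wt (fun x => if x = f then μ e + μ f else μ x) X = μ e + wt μ X := by
  rw [wt_eq_sum hX, wt_eq_sum hX]
  have h : ∀ x ∈ hX.toFinset, (if x = f then μ e + μ f else μ x)
      = μ x + (if x = f then μ e else 0) := by
    intro x _
    by_cases hx : x = f
    · subst hx; simp [add_comm]
    · simp [hx]
  rw [Finset.sum_congr rfl h, Finset.sum_add_distrib,
    Finset.sum_ite_eq' hX.toFinset f (fun _ => μ e), if_pos (hX.mem_toFinset.2 hfX)]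
  ring

lemma wt_shift_not_mem [DecidableEq α] {X : Set α} (hfX : f ∉ X) (μ : α → ℝ) :
    wt (fun x => if x = f then μ e + μ f else μ x) X = wt μ X :=
  wt_congr fun x hx => if_neg (fun hxf : x = f => hfX (hxf ▸ hx))

/-- The tilde map: realizing cocircuit weights of `M \ e` by cocircuits of `M`. -/
lemma tilde [DecidableEq α] (hfin : M.E.Finite) (hef : e ≠ f) (hpar : M.Circuit {e, f})
    (hC : (M.deleteSet {e}).Cocircuit C) (μ : α → ℝ) :
    ∃ C', M.Cocircuit C' ∧
      wt μ C' = wt (fun x => if x = f then μ e + μ f else μ x) C ∧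
      C ⊆ C' ∧ C' ⊆ insert e C := by
  have hCE : C ⊆ M.E \ {e} := ((delete_codep_iff hef hpar).1 hC.1).2
  have hCfin : C.Finite := hfin.subset (hCE.trans Set.diff_subset)
  have heC : e ∉ C := fun h => (hCE h).2 rfl
  by_cases hfC : f ∈ C
  · refine ⟨insert e C, cocirc_of_del_cocirc_mem hfin hef hpar hC hfC, ?_,
      Set.subset_insert _ _, Set.Subset.rfl⟩
    rw [wt_insert hCfin heC, wt_shift hCfin hfC]
  · refine ⟨C, cocirc_of_del_cocirc_not_mem hef hpar hC hfC, ?_,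
      Set.Subset.rfl, Set.subset_insert _ _⟩
    rw [wt_shift_not_mem hfC]

lemma tilde_sub_aux {C₁ C₂ C₃ D₁ D₂ D₃ : Set α} (hC₁E : C₁ ⊆ M.E \ {e})
    (hs₁ : C₁ ⊆ D₁) (hs₂ : D₂ ⊆ insert e C₂) (hs₃ : D₃ ⊆ insert e C₃)
    (h : D₁ ⊆ D₂ ∪ D₃) : C₁ ⊆ C₂ ∪ C₃ := by
  intro x hx
  have hxe : x ≠ e := (hC₁E hx).2
  rcases h (hs₁ hx) with h2 | h3
  · rcases Set.mem_insert_iff.1 (hs₂ h2) with rfl | h'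
    · exact absurd rfl hxe
    · exact Or.inl h'
  · rcases Set.mem_insert_iff.1 (hs₃ h3) with rfl | h'
    · exact absurd rfl hxe
    · exact Or.inr h'

lemma diff_sub_aux (hef : e ≠ f) (hpar : M.Circuit {e, f}) {C₁ C₂ C₃ : Set α}
    (h₂ : M.Cocircuit C₂) (h₃ : M.Cocircuit C₃)
    (h : C₁ \ {e} ⊆ (C₂ \ {e}) ∪ (C₃ \ {e})) (h₁ : M.Cocircuit C₁) : C₁ ⊆ C₂ ∪ C₃ := by
  intro x hx
  by_cases hxe : x = e
  · subst hxe
    have hfC₁ : f ∈ C₁ := cocirc_mem_of_mem hef hpar h₁ hx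
    have := h ⟨hfC₁, hef.symm⟩
    rcases this with h2 | h3
    · exact Or.inl ((cocirc_mem_iff hef hpar h₂).2 h2.1)
    · exact Or.inr ((cocirc_mem_iff hef hpar h₃).2 h3.1)
  · rcases h ⟨hx, hxe⟩ with h2 | h3
    · exact Or.inl h2.1
    · exact Or.inr h3.1

/-- `sys3wt` is between 0 and 3 for probability distributions. -/
lemma sys3wt_nonneg {N : Matroid α} (hNfin : N.E.Finite) {ν : α → ℝ} (hν0 : ∀ x, 0 ≤ ν x) :
    0 ≤ N.sys3wt ν := by
  refine Real.sInf_nonneg ?_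
  rintro s ⟨C₁, C₂, C₃, h₁, h₂, h₃, -, rfl⟩
  have w : ∀ {C : Set α}, N.Cocircuit C → 0 ≤ wt ν C := fun hC =>
    wt_nonneg (hNfin.subset (cocirc_subset_ground hC)) hν0
  have := w h₁; have := w h₂; have := w h₃
  linarith

lemma sys3wt_le_three {N : Matroid α} (hNfin : N.E.Finite) {ν : α → ℝ}
    (hν : N.IsProb ν) : N.sys3wt ν ≤ 3 := by
  rcases Set.eq_empty_or_nonempty {s | ∃ C₁ C₂ C₃, N.Cocircuit C₁ ∧ N.Cocircuit C₂ ∧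
      N.Cocircuit C₃ ∧ NonIncl C₁ C₂ C₃ ∧ s = wt ν C₁ + wt ν C₂ + wt ν C₃} with h | ⟨s, hs⟩
  · unfold Matroid.sys3wt
    rw [h, Real.sInf_empty]
    norm_num
  · have hbdd : BddBelow {s | ∃ C₁ C₂ C₃, N.Cocircuit C₁ ∧ N.Cocircuit C₂ ∧
        N.Cocircuit C₃ ∧ NonIncl C₁ C₂ C₃ ∧ s = wt ν C₁ + wt ν C₂ + wt ν C₃} := by
      refine ⟨0, ?_⟩
      rintro s ⟨C₁, C₂, C₃, h₁, h₂, h₃, -, rfl⟩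
      have w : ∀ {C : Set α}, N.Cocircuit C → 0 ≤ wt ν C := fun hC =>
        wt_nonneg (hNfin.subset (cocirc_subset_ground hC)) hν.1
      have := w h₁; have := w h₂; have := w h₃
      linarith
    refine le_trans (csInf_le hbdd hs) ?_
    obtain ⟨C₁, C₂, C₃, h₁, h₂, h₃, -, rfl⟩ := hs
    have w : ∀ {C : Set α}, N.Cocircuit C → wt ν C ≤ 1 := by
      intro C hC
      have := wt_mono hNfin (cocirc_subset_ground hC) hν.1
      rw [hν.2.2] at this
      exact this
    have := w h₁; have := w h₂; have := w h₃
    linarith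

end StmtAux

/-- Parallel elements and cocircuits: if `{e, f}` is a circuit, then every cocircuit
contains `e` iff it contains `f`; moreover, transferring the weight of `e` onto `f`
realizes each cocircuit weight of `M \ e` by a cocircuit of `M`, whence
`sys₃*(M, μ) ≤ sys₃*(M \ e, μ₊)` and `sys₃*(M) ≤ sys₃*(M \ e)`. -/
theorem stmt15 [DecidableEq α] (M : Matroid α) (hfin : M.E.Finite) (e f : α) (hef : e ≠ f)
    (hpar : M.Circuit {e, f}) :
    (∀ C : Set α, M.Cocircuit C → (e ∈ C ↔ f ∈ C)) ∧
    (∀ μ : α → ℝ, M.IsProb μ →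
      (∀ C : Set α, (M.deleteSet {e}).Cocircuit C →
        ∃ C' : Set α, M.Cocircuit C' ∧
          wt μ C' = wt (fun x => if x = f then μ e + μ f else μ x) C) ∧
      M.sys3wt μ ≤ (M.deleteSet {e}).sys3wt (fun x => if x = f then μ e + μ f else μ x)) ∧
    M.sys3 ≤ (M.deleteSet {e}).sys3 := by
  classical
  open StmtAux in
  have heE : e ∈ M.E := pair_mem_left hpar
  have hfE : f ∈ M.E := pair_mem_right hpar
  have hNE : (M.deleteSet {e}).E = M.E \ {e} := rfl
  have hNfin : (M.deleteSet {e}).E.Finite := hNE ▸ hfin.subset Set.diff_subset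
  -- Part 1: parallel elements and cocircuits
  have part1 : ∀ C : Set α, M.Cocircuit C → (e ∈ C ↔ f ∈ C) :=
    fun C hC => cocirc_mem_iff hef hpar hC
  -- The weighted inequality, for any nonnegative μ
  have hsys : ∀ μ : α → ℝ, (∀ x, 0 ≤ μ x) →
      M.sys3wt μ ≤ (M.deleteSet {e}).sys3wt (fun x => if x = f then μ e + μ f else μ x) := by
    intro μ hμ0
    set μ' : α → ℝ := fun x => if x = f then μ e + μ f else μ x with hμ'
    have hμ'0 : ∀ x, 0 ≤ μ' x := by
      intro x
      simp only [hμ']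
      split
      · exact add_nonneg (hμ0 e) (hμ0 f)
      · exact hμ0 x
    set S : Set ℝ := {s | ∃ C₁ C₂ C₃, M.Cocircuit C₁ ∧ M.Cocircuit C₂ ∧ M.Cocircuit C₃ ∧
      NonIncl C₁ C₂ C₃ ∧ s = wt μ C₁ + wt μ C₂ + wt μ C₃} with hS
    set S' : Set ℝ := {s | ∃ C₁ C₂ C₃, (M.deleteSet {e}).Cocircuit C₁ ∧
      (M.deleteSet {e}).Cocircuit C₂ ∧ (M.deleteSet {e}).Cocircuit C₃ ∧
      NonIncl C₁ C₂ C₃ ∧ s = wt μ' C₁ + wt μ' C₂ + wt μ' C₃} with hS'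
    have hbdd : BddBelow S := by
      refine ⟨0, ?_⟩
      rintro s ⟨C₁, C₂, C₃, h₁, h₂, h₃, -, rfl⟩
      have w : ∀ {C : Set α}, M.Cocircuit C → 0 ≤ wt μ C := fun hC =>
        wt_nonneg (hfin.subset (cocirc_subset_ground hC)) hμ0
      have := w h₁; have := w h₂; have := w h₃
      linarith
    have hmap : ∀ s ∈ S', s ∈ S := by
      rintro s ⟨C₁, C₂, C₃, h₁, h₂, h₃, hni, rfl⟩
      obtain ⟨D₁, hD₁, hw₁, hl₁, hu₁⟩ := tilde hfin hef hpar h₁ μ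
      obtain ⟨D₂, hD₂, hw₂, hl₂, hu₂⟩ := tilde hfin hef hpar h₂ μ
      obtain ⟨D₃, hD₃, hw₃, hl₃, hu₃⟩ := tilde hfin hef hpar h₃ μ
      have hCE : ∀ {C : Set α}, (M.deleteSet {e}).Cocircuit C → C ⊆ M.E \ {e} :=
        fun hC => ((delete_codep_iff hef hpar).1 hC.1).2
      refine ⟨D₁, D₂, D₃, hD₁, hD₂, hD₃, ⟨?_, ?_, ?_⟩, by rw [hw₁, hw₂, hw₃]⟩
      · exact fun h => hni.1 (tilde_sub_aux (hCE h₁) hl₁ hu₂ hu₃ h)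
      · exact fun h => hni.2.1 (tilde_sub_aux (hCE h₂) hl₂ hu₁ hu₃ h)
      · exact fun h => hni.2.2 (tilde_sub_aux (hCE h₃) hl₃ hu₁ hu₂ h)
    show sInf S ≤ sInf S'
    rcases S'.eq_empty_or_nonempty with hemp | hne
    · have hSemp : S = ∅ := by
        rw [Set.eq_empty_iff_forall_notMem]
        rintro s ⟨C₁, C₂, C₃, h₁, h₂, h₃, hni, rfl⟩
        have : (wt μ' (C₁ \ {e}) + wt μ' (C₂ \ {e}) + wt μ' (C₃ \ {e})) ∈ S' := by
          refine ⟨C₁ \ {e}, C₂ \ {e}, C₃ \ {e}, del_cocirc_of_cocirc hef hpar h₁,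
            del_cocirc_of_cocirc hef hpar h₂, del_cocirc_of_cocirc hef hpar h₃,
            ⟨?_, ?_, ?_⟩, rfl⟩
          · exact fun h => hni.1 (diff_sub_aux hef hpar h₂ h₃ h h₁)
          · exact fun h => hni.2.1 (diff_sub_aux hef hpar h₁ h₃ h h₂)
          · exact fun h => hni.2.2 (diff_sub_aux hef hpar h₁ h₂ h h₃)
        rw [hemp] at this
        exact this
      rw [hSemp, hemp]
    · exact le_csInf hne fun s hs => csInf_le hbdd (hmap s hs)
  refine ⟨part1, fun μ hμ => ⟨?_, hsys μ hμ.1⟩, ?_⟩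
  · -- existence of weight-realizing cocircuits
    intro C hC
    obtain ⟨C', hC', hw, -, -⟩ := tilde hfin hef hpar hC μ
    exact ⟨C', hC', hw⟩
  · -- sys3 inequality
    show sSup _ ≤ sSup _
    have hbddT : BddAbove {t | ∃ ν, (M.deleteSet {e}).IsProb ν ∧ t = (M.deleteSet {e}).sys3wt ν} := by
      refine ⟨3, ?_⟩
      rintro t ⟨ν, hν, rfl⟩
      exact sys3wt_le_three hNfin hν
    have hT0 : (0 : ℝ) ≤ sSup {t | ∃ ν, (M.deleteSet {e}).IsProb ν ∧
        t = (M.deleteSet {e}).sys3wt ν} := by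
      rcases Set.eq_empty_or_nonempty {t | ∃ ν, (M.deleteSet {e}).IsProb ν ∧
          t = (M.deleteSet {e}).sys3wt ν} with h | ⟨t, ht⟩
      · rw [h, Real.sSup_empty]
      · refine le_trans ?_ (le_csSup hbddT ht)
        obtain ⟨ν, hν, rfl⟩ := ht
        exact sys3wt_nonneg hNfin hν.1
    refine Real.sSup_le ?_ hT0
    rintro t ⟨μ, hμ, rfl⟩
    set μ' : α → ℝ := fun x => if x = f then μ e + μ f else μ x with hμ'
    set ν : α → ℝ := fun x => if x = e then 0 else μ' x with hν
    have hν0 : ∀ x, 0 ≤ ν x := by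
      intro x
      simp only [hν, hμ']
      split
      · exact le_refl 0
      · split
        · exact add_nonneg (hμ.1 e) (hμ.1 f)
        · exact hμ.1 x
    have hνprob : (M.deleteSet {e}).IsProb ν := by
      refine ⟨hν0, ?_, ?_⟩
      · intro x hx
        rw [hNE] at hx
        by_cases hxe : x = e
        · simp [hν, hxe]
        · have hxE : x ∉ M.E := fun h => hx ⟨h, hxe⟩
          have hxf : x ≠ f := fun h => hxE (h ▸ hfE)
          simp [hν, hμ', hxe, hxf, hμ.2.1 x hxE]
      · rw [hNE]
        have hEfin : (M.E \ {e}).Finite := hfin.subset Set.diff_subset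
        have heE' : e ∉ M.E \ {e} := fun h => h.2 rfl
        have h1 : wt ν (M.E \ {e}) = wt μ' (M.E \ {e}) :=
          wt_congr fun x hx => by
            have hxe : x ≠ e := by simpa using hx.2
            simp [hν, hxe]
        have h2 : wt μ' (M.E \ {e}) = μ e + wt μ (M.E \ {e}) :=
          wt_shift hEfin ⟨hfE, hef.symm⟩ μ
        have h3 : wt μ (insert e (M.E \ {e})) = μ e + wt μ (M.E \ {e}) :=
          wt_insert hEfin heE' μ
        rw [Set.insert_diff_singleton, Set.insert_eq_of_mem heE] at h3
        rw [h1, h2, ← h3, hμ.2.2]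
    have heq : (M.deleteSet {e}).sys3wt μ' = (M.deleteSet {e}).sys3wt ν := by
      unfold Matroid.sys3wt
      congr 1
      ext s
      constructor <;> rintro ⟨C₁, C₂, C₃, h₁, h₂, h₃, hni, rfl⟩ <;>
        refine ⟨C₁, C₂, C₃, h₁, h₂, h₃, hni, ?_⟩ <;>
        · have hw : ∀ {C : Set α}, (M.deleteSet {e}).Cocircuit C → wt μ' C = wt ν C := by
            intro C hC
            refine wt_congr fun x hx => ?_
            have : x ≠ e := (((delete_codep_iff hef hpar).1 hC.1).2 hx).2
            simp [hν, this]
          rw [hw h₁, hw h₂, hw h₃]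
    calc M.sys3wt μ ≤ (M.deleteSet {e}).sys3wt μ' := hsys μ hμ.1
      _ = (M.deleteSet {e}).sys3wt ν := heq
      _ ≤ _ := le_csSup hbddT ⟨ν, hνprob, rfl⟩
end
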